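/- Let P = e_1…e_k be a path all of whose arc gains lie in [−B, B]. Let F_1 = e_a…e_b and F_2 = e_c…e_d be two distinct subpaths of P that are funnels, each maximal with respect to inclusion among funnel subpaths of P. If a < c, then c ≥ b − 1; moreover, if c = b − 1 then g(e_{b−1}) = −g(e_b). -/

import Mathlib

open Finset

namespace EV

noncomputable section

/-- Charge after traversing `i` arcs of a path with arc gains `g`, battery capacity `B`,
initial charge `b`. -/
def charge (B b : ℝ) (g : ℕ → ℝ) : ℕ → ℝ
  | 0 => b
  | i + 1 => min (charge B b g i + g i) B

/-- The traversal of the path with `n` arcs is feasible from initial charge `b`. -/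
def Feasible (B b : ℝ) (g : ℕ → ℝ) (n : ℕ) : Prop :=
  ∀ i < n, 0 ≤ charge B b g i + g i

open Classical in
/-- Maximum final charge `α_b(P)` for a path `P` with `n` arc gains `g`,
as an extended real (`⊥ = -∞` if the traversal is infeasible). -/
def alpha (B b : ℝ) (g : ℕ → ℝ) (n : ℕ) : EReal :=
  if Feasible B b g n then ((charge B b g n : ℝ) : EReal) else ⊥

/-- Gain of the `i`-th vertex (0-indexed): the sum of the first `i` arc gains. -/
def vGain (g : ℕ → ℝ) (i : ℕ) : ℝ := ∑ t ∈ Finset.range i, g t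

/-- `P` is traversable: `α_B(P) ≥ 0`, i.e. feasible from a full battery. -/
def Traversable (B : ℝ) (g : ℕ → ℝ) (n : ℕ) : Prop := Feasible B B g n

/-- `C` is a charge drop schedule for a path with `n` arcs (vertices `0,…,n`):
no drop at the first vertex, all drops nonnegative. -/
def Schedule (C : ℕ → ℝ) (n : ℕ) : Prop := C 0 = 0 ∧ ∀ i ≤ n, 0 ≤ C i

/-- Gain of vertex `i` with respect to the charge drop schedule `C`. -/
def cGain (g C : ℕ → ℝ) (i : ℕ) : ℝ := vGain g i - ∑ t ∈ Finset.range (i + 1), C t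

/-- `P` (with `n` arcs) is ascending with respect to the schedule `C`. -/
def AscendingC (B : ℝ) (g C : ℕ → ℝ) (n : ℕ) : Prop :=
  Traversable B g n ∧ ∀ i ≤ n, 0 ≤ cGain g C i ∧ cGain g C i ≤ cGain g C n

/-- `P` (with `n` arcs) is descending with respect to the schedule `C`. -/
def DescendingC (B : ℝ) (g C : ℕ → ℝ) (n : ℕ) : Prop :=
  Traversable B g n ∧ ∀ i ≤ n, cGain g C n ≤ cGain g C i ∧ cGain g C i ≤ 0

/-- `P` is monotone with respect to the schedule `C`. -/
def MonotoneC (B : ℝ) (g C : ℕ → ℝ) (n : ℕ) : Prop :=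
  AscendingC B g C n ∨ DescendingC B g C n

/-- Ascending with respect to the zero schedule. -/
def Ascending (B : ℝ) (g : ℕ → ℝ) (n : ℕ) : Prop := AscendingC B g (fun _ => 0) n

/-- Descending with respect to the zero schedule. -/
def Descending (B : ℝ) (g : ℕ → ℝ) (n : ℕ) : Prop := DescendingC B g (fun _ => 0) n

/-- Monotone with respect to the zero schedule. -/
def MonotonePath (B : ℝ) (g : ℕ → ℝ) (n : ℕ) : Prop := Ascending B g n ∨ Descending B g n

/-- The contiguous subpath whose arcs start at arc index `a`. -/
def SubPath (g : ℕ → ℝ) (a : ℕ) : ℕ → ℝ := fun t => g (a + t)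

/-- Restriction of a charge drop schedule to the subpath starting at vertex `a`:
no drop at the subpath's first vertex. -/
def restrict (C : ℕ → ℝ) (a : ℕ) : ℕ → ℝ := fun t => if t = 0 then 0 else C (a + t)

/-- First-arc-bounded with respect to a schedule `C` (no drop at the second vertex,
and all vertex gains lie between the gains of the first two vertices). -/
def FirstArcBoundedC (g C : ℕ → ℝ) (n : ℕ) : Prop :=
  C 1 = 0 ∧
    ((0 ≤ g 0 ∧ ∀ i ≤ n, 0 ≤ cGain g C i ∧ cGain g C i ≤ g 0) ∨
     (g 0 ≤ 0 ∧ ∀ i ≤ n, g 0 ≤ cGain g C i ∧ cGain g C i ≤ 0))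

/-- Last-arc-bounded with respect to a schedule `C` (no drops at the last two vertices,
and all vertex gains lie between the gains of the last two vertices). -/
def LastArcBoundedC (g C : ℕ → ℝ) (n : ℕ) : Prop :=
  C (n - 1) = 0 ∧ C n = 0 ∧
    ((0 ≤ g (n - 1) ∧ ∀ i ≤ n, cGain g C (n - 1) ≤ cGain g C i ∧ cGain g C i ≤ cGain g C n) ∨
     (g (n - 1) < 0 ∧ ∀ i ≤ n, cGain g C n ≤ cGain g C i ∧ cGain g C i ≤ cGain g C (n - 1)))

/-- First-arc-bounded (zero schedule). -/
def FirstArcBounded (g : ℕ → ℝ) (n : ℕ) : Prop := FirstArcBoundedC g (fun _ => 0) n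

/-- Last-arc-bounded (zero schedule). -/
def LastArcBounded (g : ℕ → ℝ) (n : ℕ) : Prop := LastArcBoundedC g (fun _ => 0) n

/-- Arc-bounded: first- or last-arc-bounded. -/
def ArcBounded (g : ℕ → ℝ) (n : ℕ) : Prop := FirstArcBounded g n ∨ LastArcBounded g n

/-- A funnel: arc-bounded and containing no monotone subpath of 2 or 3 consecutive arcs. -/
def Funnel (B : ℝ) (g : ℕ → ℝ) (n : ℕ) : Prop :=
  ArcBounded g n ∧ ∀ a m, (m = 2 ∨ m = 3) → a + m ≤ n → ¬ MonotonePath B (SubPath g a) m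

/-- `j = s̄(i)`: the maximal index `j ≥ i` (among arcs of a path with `n` arcs) such that
the subpath of arcs `i,…,j` is first-arc-bounded. -/
def IsSbar (g : ℕ → ℝ) (n i j : ℕ) : Prop :=
  i ≤ j ∧ j < n ∧ FirstArcBounded (SubPath g i) (j - i + 1) ∧
    ∀ j', i ≤ j' → j' < n → FirstArcBounded (SubPath g i) (j' - i + 1) → j' ≤ j

/-- `j = s̲(i)`: the minimal index `j ≤ i` such that the subpath of arcs `j,…,i`
is last-arc-bounded. -/
def IsSlow (g : ℕ → ℝ) (n i j : ℕ) : Prop :=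
  j ≤ i ∧ i < n ∧ LastArcBounded (SubPath g j) (i - j + 1) ∧
    ∀ j', j' ≤ i → LastArcBounded (SubPath g j') (i - j' + 1) → j ≤ j'

/-- Arc gains of the walk around a cycle with `m` arc gains `g`, starting at vertex `a`. -/
def cyc (g : ℕ → ℝ) (m a : ℕ) : ℕ → ℝ := fun t => g ((a + t) % m)

/-- A walk of length `ℓ` from `x` to `y` in the directed graph with arc relation `A`. -/
def IsWalk {V : Type*} (A : V → V → Prop) (w : ℕ → V) (ℓ : ℕ) (x y : V) : Prop :=
  w 0 = x ∧ w ℓ = y ∧ ∀ t < ℓ, A (w t) (w (t + 1))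

/-- The sequence of arc gains induced by a walk `w` in a graph with gain function `g`. -/
def walkGains {V : Type*} (g : V → V → ℝ) (w : ℕ → V) : ℕ → ℝ :=
  fun t => g (w t) (w (t + 1))

/-!
With all gains in `[-B, B]`, arc-boundedness traps every vertex gain of a funnel in an interval
of width at most `B`, so every subpath of a funnel is traversable. "No monotone subpath of two or
three arcs" then becomes a condition on the gains alone: consecutive arcs have gains of strictly
opposite signs, and `|g|` has no interior local minimum. Hence `|g|` is nonincreasing along a
first-arc-bounded funnel and strictly increasing along a last-arc-bounded one except possibly at
its last step. Conversely, an alternating path along which `|g|` is nonincreasing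
(nondecreasing) is first- (last-)arc-bounded, its vertex gains being caught in nested intervals.

If two maximal funnels shared the arcs `c` and `c + 1`, then for funnels of the same type their
union would be a larger funnel, while for funnels of opposite types the comparison of `|g c|`
with `|g (c + 1)|` is contradictory unless `c + 1` is the last arc of the first funnel; there it
only forces `|g c| = |g (c + 1)|`, that is `g c = -g (c + 1)`.
-/

open scoped Interval

lemma mem_uIcc_iff_abs_le {α : Type*} [CommRing α] [LinearOrder α] [IsStrictOrderedRing α]
    {u v w : α} (h : (v - u) * (w - v) ≤ 0) : w ∈ [[u, v]] ↔ |w - v| ≤ |v - u| := by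
  rw [Set.mem_uIcc]
  rcases lt_trichotomy u v with huv | rfl | huv
  · have : w - v ≤ 0 := by nlinarith
    rw [abs_of_nonpos this, abs_of_pos (by linarith)]
    constructor
    · rintro (h' | h') <;> linarith
    · intro; left; constructor <;> linarith
  · simp [and_comm, le_antisymm_iff]
  · have : 0 ≤ w - v := by nlinarith
    rw [abs_of_nonneg this, abs_of_neg (by linarith)]
    constructor
    · rintro (h' | h') <;> linarith
    · intro; right; constructor <;> linarith

lemma eq_neg_of_abs_eq_of_mul_neg {α : Type*} [Ring α] [LinearOrder α] [IsStrictOrderedRing α]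
    {x y : α} (habs : |x| = |y|) (hxy : x * y < 0) : x = -y :=
  (abs_eq_abs.1 habs).resolve_left fun h => (mul_self_nonneg y).not_gt (h ▸ hxy)

lemma mem_uIcc_of_forall_add_two_mem {α : Type*} [Lattice α] {p : ℕ → α} {n : ℕ}
    (h : ∀ j, j + 2 ≤ n → p (j + 2) ∈ [[p j, p (j + 1)]]) : ∀ i ≤ n, p i ∈ [[p 0, p 1]] := by
  intro i
  induction i using Nat.strong_induction_on with
  | _ i ih =>
    match i with
    | 0 => exact fun _ => Set.left_mem_uIcc
    | 1 => exact fun _ => Set.right_mem_uIcc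
    | k + 2 =>
      exact fun hk => Set.uIcc_subset_uIcc (ih k (by omega) (by omega))
        (ih (k + 1) (by omega) (by omega)) (h k hk)

lemma forall_of_overlap {P : ℕ → Prop} {a b c d k : ℕ} (hcb : c + k ≤ b + 1)
    (h₁ : ∀ j, a ≤ j → j + k ≤ b → P j) (h₂ : ∀ j, c ≤ j → j + k ≤ d → P j) :
    ∀ j, a ≤ j → j + k ≤ d → P j := fun j haj hjd =>
  (le_or_gt (j + k) b).elim (h₁ j haj) fun _ => h₂ j (by omega) hjd

section Path

variable {B : ℝ} {g : ℕ → ℝ} {n : ℕ}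

lemma vGain_zero : vGain g 0 = 0 :=
  Finset.sum_range_zero g

lemma vGain_succ (i : ℕ) : vGain g (i + 1) = vGain g i + g i :=
  Finset.sum_range_succ g i

lemma vGain_subPath (l i : ℕ) : vGain (SubPath g l) i = vGain g (l + i) - vGain g l := by
  simp [vGain, SubPath, Finset.sum_range_add]

lemma cGain_const_zero (i : ℕ) : cGain g (fun _ => 0) i = vGain g i := by
  simp [cGain]

lemma subPath_subPath (l j : ℕ) : SubPath (SubPath g l) j = SubPath g (l + j) := by
  funext t
  simp [SubPath, add_assoc]

lemma firstArcBounded_iff :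
    FirstArcBounded g n ↔ ∀ i ≤ n, vGain g i ∈ [[vGain g 0, vGain g 1]] := by
  simp only [FirstArcBounded, FirstArcBoundedC, cGain_const_zero, true_and, vGain_succ,
    vGain_zero, zero_add]
  constructor
  · rintro (⟨-, h⟩ | ⟨-, h⟩) i hi
    · exact Set.mem_uIcc.2 (Or.inl (h i hi))
    · exact Set.mem_uIcc.2 (Or.inr (h i hi))
  · intro h
    rcases le_total 0 (g 0) with h0 | h0
    · exact Or.inl ⟨h0, fun i hi => by simpa [Set.uIcc_of_le h0] using h i hi⟩
    · exact Or.inr ⟨h0, fun i hi => by simpa [Set.uIcc_of_ge h0] using h i hi⟩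

lemma lastArcBounded_iff :
    LastArcBounded g n ↔ ∀ i ≤ n, vGain g i ∈ [[vGain g (n - 1), vGain g n]] := by
  simp only [LastArcBounded, LastArcBoundedC, cGain_const_zero, true_and]
  obtain _ | m := n
  · simp [le_or_gt]
  simp only [Nat.add_sub_cancel, vGain_succ]
  constructor
  · rintro (⟨-, h⟩ | ⟨-, h⟩) i hi
    · exact Set.mem_uIcc.2 (Or.inl (h i hi))
    · exact Set.mem_uIcc.2 (Or.inr (h i hi))
  · intro h
    rcases le_or_gt 0 (g m) with h0 | h0
    · exact Or.inl ⟨h0, fun i hi => by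
        simpa [Set.uIcc_of_le (le_add_of_nonneg_right h0)] using h i hi⟩
    · exact Or.inr ⟨h0, fun i hi => by
        simpa [Set.uIcc_of_ge (add_le_of_nonpos_right h0.le)] using h i hi⟩

lemma vGain_add_two_mem_uIcc_iff {j : ℕ} (h : g j * g (j + 1) ≤ 0) :
    vGain g (j + 2) ∈ [[vGain g j, vGain g (j + 1)]] ↔ |g (j + 1)| ≤ |g j| := by
  rw [mem_uIcc_iff_abs_le] <;> simp only [vGain_succ, add_sub_cancel_left]
  exact h

lemma vGain_mem_uIcc_iff {j : ℕ} (h : g j * g (j + 1) ≤ 0) :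
    vGain g j ∈ [[vGain g (j + 2), vGain g (j + 1)]] ↔ |g j| ≤ |g (j + 1)| := by
  rw [mem_uIcc_iff_abs_le] <;> simp only [vGain_succ, sub_add_cancel_left, abs_neg, neg_mul_neg]
  rwa [mul_comm]

lemma FirstArcBounded.abs_one_le (h : FirstArcBounded g n) (halt : g 0 * g 1 ≤ 0)
    (hn : 2 ≤ n) : |g 1| ≤ |g 0| :=
  (vGain_add_two_mem_uIcc_iff halt).1 (firstArcBounded_iff.1 h 2 hn)

lemma LastArcBounded.abs_le_succ {m : ℕ} (h : LastArcBounded g (m + 2))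
    (halt : g m * g (m + 1) ≤ 0) : |g m| ≤ |g (m + 1)| :=
  (vGain_mem_uIcc_iff halt).1 (by simpa [Set.uIcc_comm] using lastArcBounded_iff.1 h m (by omega))

lemma firstArcBounded_of_abs_succ_le (halt : ∀ j, j + 2 ≤ n → g j * g (j + 1) ≤ 0)
    (habs : ∀ j, j + 2 ≤ n → |g (j + 1)| ≤ |g j|) : FirstArcBounded g n :=
  firstArcBounded_iff.2 <| mem_uIcc_of_forall_add_two_mem fun j hj =>
    (vGain_add_two_mem_uIcc_iff (halt j hj)).2 (habs j hj)

lemma lastArcBounded_of_abs_le_succ (halt : ∀ j, j + 2 ≤ n → g j * g (j + 1) ≤ 0)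
    (habs : ∀ j, j + 2 ≤ n → |g j| ≤ |g (j + 1)|) : LastArcBounded g n := by
  refine lastArcBounded_iff.2 fun i hi => ?_
  have := mem_uIcc_of_forall_add_two_mem (p := fun k => vGain g (n - k)) (n := n) ?_ (n - i)
    (Nat.sub_le n i)
  · simpa [Nat.sub_sub_self hi, Set.uIcc_comm] using this
  · intro k hk
    obtain ⟨j, rfl⟩ : ∃ j, n = j + k + 2 := ⟨n - k - 2, by omega⟩
    simp only [show j + k + 2 - k = j + 2 by omega, show j + k + 2 - (k + 1) = j + 1 by omega,
      show j + k + 2 - (k + 2) = j by omega]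
    exact (vGain_mem_uIcc_iff (halt j (by omega))).2 (habs j (by omega))

lemma ArcBounded.abs_vGain_sub_le (h : ArcBounded g n) (hn : 0 < n)
    (hr : ∀ i < n, |g i| ≤ B) {i j : ℕ} (hi : i ≤ n) (hj : j ≤ n) :
    |vGain g i - vGain g j| ≤ B := by
  obtain ⟨k, hk, hmem⟩ : ∃ k < n, ∀ i ≤ n, vGain g i ∈ [[vGain g k, vGain g (k + 1)]] := by
    rcases h with h | h
    · exact ⟨0, hn, firstArcBounded_iff.1 h⟩
    · exact ⟨n - 1, by omega, by simpa [Nat.sub_add_cancel hn] using lastArcBounded_iff.1 h⟩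
  calc |vGain g i - vGain g j| ≤ |vGain g (k + 1) - vGain g k| :=
        Set.abs_sub_le_of_uIcc_subset_uIcc (Set.uIcc_subset_uIcc (hmem j hj) (hmem i hi))
    _ = |g k| := by rw [vGain_succ, add_sub_cancel_left]
    _ ≤ B := hr k hk

-- `j` is the last vertex up to `i` at which the battery is full.
lemma exists_charge_eq (B : ℝ) (g : ℕ → ℝ) (i : ℕ) :
    ∃ j ≤ i, charge B B g i = B + (vGain g i - vGain g j) := by
  induction i with
  | zero => exact ⟨0, le_rfl, by simp [charge]⟩
  | succ i ih =>
    obtain ⟨j, hj, h⟩ := ih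
    rcases le_total (charge B B g i + g i) B with hle | hle
    · exact ⟨j, hj.trans i.le_succ, by rw [charge, min_eq_left hle, h, vGain_succ]; ring⟩
    · exact ⟨i + 1, le_rfl, by rw [charge, min_eq_right hle]; ring⟩

lemma traversable_of_forall_le_sub (h : ∀ i j, i ≤ j → j ≤ n → -B ≤ vGain g j - vGain g i) :
    Traversable B g n := by
  intro i hi
  obtain ⟨j, hj, hc⟩ := exists_charge_eq B g i
  have := h j (i + 1) (by omega) hi
  rw [vGain_succ] at this
  linarith

lemma ArcBounded.traversable_subPath (h : ArcBounded g n) (hr : ∀ i < n, |g i| ≤ B)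
    {j m : ℕ} (hjm : j + m ≤ n) : Traversable B (SubPath g j) m := by
  rcases Nat.eq_zero_or_pos m with rfl | hm
  · exact fun i hi => absurd hi i.not_lt_zero
  refine traversable_of_forall_le_sub fun p q hpq hq => ?_
  rw [vGain_subPath, vGain_subPath, sub_sub_sub_cancel_right]
  exact neg_le_of_abs_le (h.abs_vGain_sub_le (by omega) hr (by omega) (by omega))

lemma monotonePath_two (hT : Traversable B g 2) (h : 0 ≤ g 0 * g 1) : MonotonePath B g 2 := by
  simp only [MonotonePath, Ascending, Descending, AscendingC, DescendingC, cGain_const_zero, hT,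
    true_and]
  rcases mul_nonneg_iff.1 h with ⟨h0, h1⟩ | ⟨h0, h1⟩
  · left
    intro i hi
    interval_cases i <;> simp only [vGain_succ, vGain_zero, zero_add] <;> constructor <;> linarith
  · right
    intro i hi
    interval_cases i <;> simp only [vGain_succ, vGain_zero, zero_add] <;> constructor <;> linarith

lemma monotonePath_three (hT : Traversable B g 3) (h₀₁ : g 0 * g 1 < 0) (h₁₂ : g 1 * g 2 < 0)
    (h₀ : |g 1| ≤ |g 0|) (h₂ : |g 1| ≤ |g 2|) : MonotonePath B g 3 := by
  simp only [MonotonePath, Ascending, Descending, AscendingC, DescendingC, cGain_const_zero, hT,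
    true_and]
  rcases mul_neg_iff.1 h₀₁ with ⟨h0, h1⟩ | ⟨h0, h1⟩
  · have h2 : 0 < g 2 := by nlinarith
    rw [abs_of_neg h1, abs_of_pos h0] at h₀
    rw [abs_of_neg h1, abs_of_pos h2] at h₂
    left
    intro i hi
    interval_cases i <;> simp only [vGain_succ, vGain_zero, zero_add] <;> constructor <;> linarith
  · have h2 : g 2 < 0 := by nlinarith
    rw [abs_of_pos h1, abs_of_neg h0] at h₀
    rw [abs_of_pos h1, abs_of_neg h2] at h₂
    right
    intro i hi
    interval_cases i <;> simp only [vGain_succ, vGain_zero, zero_add] <;> constructor <;> linarith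

end Path

section Funnel

variable {B : ℝ} {g : ℕ → ℝ} {l n : ℕ}

lemma Funnel.not_monotonePath (hF : Funnel B (SubPath g l) n) {j m : ℕ} (hm : m = 2 ∨ m = 3)
    (hlj : l ≤ j) (hjm : j + m ≤ l + n) : ¬ MonotonePath B (SubPath g j) m := by
  have := hF.2 (j - l) m hm (by omega)
  rwa [subPath_subPath, Nat.add_sub_cancel' hlj] at this

lemma Funnel.traversable (hF : Funnel B (SubPath g l) n) (hr : ∀ i < n, |g (l + i)| ≤ B)
    {j m : ℕ} (hlj : l ≤ j) (hjm : j + m ≤ l + n) : Traversable B (SubPath g j) m := by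
  have := hF.1.traversable_subPath hr (j := j - l) (m := m) (by omega)
  rwa [subPath_subPath, Nat.add_sub_cancel' hlj] at this

lemma Funnel.mul_succ_neg (hF : Funnel B (SubPath g l) n) (hr : ∀ i < n, |g (l + i)| ≤ B)
    {j : ℕ} (hlj : l ≤ j) (hj : j + 2 ≤ l + n) : g j * g (j + 1) < 0 :=
  not_le.1 fun h =>
    hF.not_monotonePath (Or.inl rfl) hlj hj (monotonePath_two (hF.traversable hr hlj hj) h)

lemma Funnel.abs_add_two_lt_of_abs_succ_le (hF : Funnel B (SubPath g l) n)
    (hr : ∀ i < n, |g (l + i)| ≤ B) {j : ℕ} (hlj : l ≤ j) (hj : j + 3 ≤ l + n)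
    (h : |g (j + 1)| ≤ |g j|) : |g (j + 2)| < |g (j + 1)| :=
  not_le.1 fun h' => hF.not_monotonePath (Or.inr rfl) hlj hj <|
    monotonePath_three (hF.traversable hr hlj hj) (hF.mul_succ_neg hr hlj (by omega))
      (hF.mul_succ_neg hr (by omega) (by omega)) h h'

lemma Funnel.abs_succ_lt_of_abs_succ_le (hF : Funnel B (SubPath g l) n)
    (hr : ∀ i < n, |g (l + i)| ≤ B) {i k : ℕ} (hli : l ≤ i) (hik : i < k) (hk : k + 2 ≤ l + n)
    (h : |g (i + 1)| ≤ |g i|) : |g (k + 1)| < |g k| := by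
  induction k, hik using Nat.le_induction with
  | base => exact hF.abs_add_two_lt_of_abs_succ_le hr hli (by omega) h
  | succ k hik ih =>
    exact hF.abs_add_two_lt_of_abs_succ_le hr (by omega) (by omega) (ih (by omega)).le

lemma Funnel.abs_succ_le_of_firstArcBounded (hF : Funnel B (SubPath g l) n)
    (hr : ∀ i < n, |g (l + i)| ≤ B) (hFAB : FirstArcBounded (SubPath g l) n) {j : ℕ}
    (hlj : l ≤ j) (hj : j + 2 ≤ l + n) : |g (j + 1)| ≤ |g j| := by
  have hfirst : |g (l + 1)| ≤ |g l| :=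
    hFAB.abs_one_le (hF.mul_succ_neg hr le_rfl (by omega)).le (by omega)
  obtain rfl | hlj := hlj.eq_or_lt
  · exact hfirst
  · exact (hF.abs_succ_lt_of_abs_succ_le hr le_rfl hlj hj hfirst).le

lemma Funnel.abs_lt_succ_of_lastArcBounded (hF : Funnel B (SubPath g l) n)
    (hr : ∀ i < n, |g (l + i)| ≤ B) (hLAB : LastArcBounded (SubPath g l) n) {j : ℕ}
    (hlj : l ≤ j) (hj : j + 3 ≤ l + n) : |g j| < |g (j + 1)| := by
  obtain ⟨m, rfl⟩ : ∃ m, n = m + 2 := ⟨n - 2, by omega⟩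
  have hlast : |g (l + m)| ≤ |g (l + m + 1)| :=
    hLAB.abs_le_succ (hF.mul_succ_neg hr (by omega) (by omega)).le
  by_contra! h
  exact (hF.abs_succ_lt_of_abs_succ_le hr hlj (by omega) (by omega) h).not_ge hlast

lemma Funnel.abs_le_succ_of_lastArcBounded (hF : Funnel B (SubPath g l) n)
    (hr : ∀ i < n, |g (l + i)| ≤ B) (hLAB : LastArcBounded (SubPath g l) n) {j : ℕ}
    (hlj : l ≤ j) (hj : j + 2 ≤ l + n) : |g j| ≤ |g (j + 1)| := by
  obtain hj | hj := Nat.lt_or_ge (j + 2) (l + n)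
  · exact (hF.abs_lt_succ_of_lastArcBounded hr hLAB hlj hj).le
  · obtain ⟨m, rfl⟩ : ∃ m, n = m + 2 := ⟨n - 2, by omega⟩
    obtain rfl : j = l + m := by omega
    exact hLAB.abs_le_succ (hF.mul_succ_neg hr hlj (by omega)).le

variable {a c n₁ n₂ N : ℕ}

lemma Funnel.union_of_arcBounded (hF₁ : Funnel B (SubPath g a) n₁)
    (hF₂ : Funnel B (SubPath g c) n₂) (hc : c + 2 ≤ a + n₁) (hN : a + N = c + n₂)
    (hAB : ArcBounded (SubPath g a) N) : Funnel B (SubPath g a) N := by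
  refine ⟨hAB, fun j m hm hjm => ?_⟩
  rw [subPath_subPath]
  exact forall_of_overlap (P := fun j => ¬ MonotonePath B (SubPath g j) m) (by omega)
    (fun _ => hF₁.not_monotonePath hm) (fun _ => hF₂.not_monotonePath hm) (a + j) (by omega)
    (by omega)

lemma Funnel.union_of_firstArcBounded (hF₁ : Funnel B (SubPath g a) n₁)
    (hF₂ : Funnel B (SubPath g c) n₂) (hr₁ : ∀ i < n₁, |g (a + i)| ≤ B)
    (hr₂ : ∀ i < n₂, |g (c + i)| ≤ B) (h₁ : FirstArcBounded (SubPath g a) n₁)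
    (h₂ : FirstArcBounded (SubPath g c) n₂) (hc : c + 2 ≤ a + n₁) (hN : a + N = c + n₂) :
    Funnel B (SubPath g a) N := by
  have hsteps := forall_of_overlap (P := fun j => g j * g (j + 1) ≤ 0 ∧ |g (j + 1)| ≤ |g j|)
    (by omega)
    (fun _ hj hj' => ⟨(hF₁.mul_succ_neg hr₁ hj hj').le,
      hF₁.abs_succ_le_of_firstArcBounded hr₁ h₁ hj hj'⟩)
    (fun _ hj hj' => ⟨(hF₂.mul_succ_neg hr₂ hj hj').le,
      hF₂.abs_succ_le_of_firstArcBounded hr₂ h₂ hj hj'⟩)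
  exact hF₁.union_of_arcBounded hF₂ hc hN <| Or.inl <| firstArcBounded_of_abs_succ_le
    (fun j _ => (hsteps (a + j) (by omega) (by omega)).1)
    (fun j _ => (hsteps (a + j) (by omega) (by omega)).2)

lemma Funnel.union_of_lastArcBounded (hF₁ : Funnel B (SubPath g a) n₁)
    (hF₂ : Funnel B (SubPath g c) n₂) (hr₁ : ∀ i < n₁, |g (a + i)| ≤ B)
    (hr₂ : ∀ i < n₂, |g (c + i)| ≤ B) (h₁ : LastArcBounded (SubPath g a) n₁)
    (h₂ : LastArcBounded (SubPath g c) n₂) (hc : c + 2 ≤ a + n₁) (hN : a + N = c + n₂) :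
    Funnel B (SubPath g a) N := by
  have hsteps := forall_of_overlap (P := fun j => g j * g (j + 1) ≤ 0 ∧ |g j| ≤ |g (j + 1)|)
    (by omega)
    (fun _ hj hj' => ⟨(hF₁.mul_succ_neg hr₁ hj hj').le,
      hF₁.abs_le_succ_of_lastArcBounded hr₁ h₁ hj hj'⟩)
    (fun _ hj hj' => ⟨(hF₂.mul_succ_neg hr₂ hj hj').le,
      hF₂.abs_le_succ_of_lastArcBounded hr₂ h₂ hj hj'⟩)
  exact hF₁.union_of_arcBounded hF₂ hc hN <| Or.inr <| lastArcBounded_of_abs_le_succ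
    (fun j _ => (hsteps (a + j) (by omega) (by omega)).1)
    (fun j _ => (hsteps (a + j) (by omega) (by omega)).2)

end Funnel

theorem maximal_funnel_intersection_general (B : ℝ) (g : ℕ → ℝ) (n : ℕ)
    (hrange : ∀ i < n, |g i| ≤ B)
    (a b c d : ℕ) (hbn : b < n) (hcd : c ≤ d) (hdn : d < n)
    (hF1 : Funnel B (SubPath g a) (b - a + 1))
    (hF2 : Funnel B (SubPath g c) (d - c + 1))
    (hmax1 : ∀ a' b', a' ≤ a → b ≤ b' → b' < n →
      Funnel B (SubPath g a') (b' - a' + 1) → a' = a ∧ b' = b)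
    (hmax2 : ∀ c' d', c' ≤ c → d ≤ d' → d' < n →
      Funnel B (SubPath g c') (d' - c' + 1) → c' = c ∧ d' = d)
    (hac : a < c) :
    b ≤ c + 1 ∧ (c + 1 = b → g c = -g b) := by
  have hbd : b < d := by
    by_contra! h
    exact hac.ne (hmax2 a b hac.le h hbn hF1).1
  have hr₁ : ∀ i < b - a + 1, |g (a + i)| ≤ B := fun i hi => hrange _ (by omega)
  have hr₂ : ∀ i < d - c + 1, |g (c + i)| ≤ B := fun i hi => hrange _ (by omega)
  have hnot_union : ¬ Funnel B (SubPath g a) (d - a + 1) := fun hU => by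
    have := hmax1 a d le_rfl hbd.le hdn hU
    omega
  suffices key : c + 1 ≤ b → b = c + 1 ∧ g c = -g b from
    ⟨not_lt.1 fun h => absurd (key h.le).1 (by omega), fun h => (key h.le).2⟩
  intro hcb
  rcases hF1.1 with h₁ | h₁ <;> rcases hF2.1 with h₂ | h₂
  · exact absurd (hF1.union_of_firstArcBounded hF2 hr₁ hr₂ h₁ h₂ (by omega) (by omega)) hnot_union
  · exact absurd (hF2.abs_lt_succ_of_lastArcBounded hr₂ h₂ le_rfl (by omega))
      (hF1.abs_succ_le_of_firstArcBounded hr₁ h₁ hac.le (by omega)).not_gt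
  · have h₂' := hF2.abs_succ_le_of_firstArcBounded hr₂ h₂ le_rfl (by omega)
    obtain hb | rfl : c + 2 ≤ b ∨ b = c + 1 := by omega
    · exact absurd (hF1.abs_lt_succ_of_lastArcBounded hr₁ h₁ hac.le (by omega)) h₂'.not_gt
    · exact ⟨rfl, eq_neg_of_abs_eq_of_mul_neg
        ((hF1.abs_le_succ_of_lastArcBounded hr₁ h₁ hac.le (by omega)).antisymm h₂')
        (hF1.mul_succ_neg hr₁ hac.le (by omega))⟩
  · exact absurd (hF1.union_of_lastArcBounded hF2 hr₁ hr₂ h₁ h₂ (by omega) (by omega)) hnot_union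

/-- Two distinct inclusion-maximal funnel subpaths `e_a…e_b` and `e_c…e_d`
of a path with gains in `[-B,B]` with `a < c` satisfy `c ≥ b - 1`, and if `c = b - 1`
then `g(e_{b-1}) = -g(e_b)` (arc indices are 0-based). -/
theorem maximal_funnel_intersection (B : ℝ) (hB : 0 < B) (g : ℕ → ℝ) (n : ℕ)
    (hrange : ∀ i < n, |g i| ≤ B)
    (a b c d : ℕ) (hab : a ≤ b) (hbn : b < n) (hcd : c ≤ d) (hdn : d < n)
    (hF1 : Funnel B (SubPath g a) (b - a + 1))
    (hF2 : Funnel B (SubPath g c) (d - c + 1))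
    (hmax1 : ∀ a' b', a' ≤ a → b ≤ b' → b' < n →
      Funnel B (SubPath g a') (b' - a' + 1) → a' = a ∧ b' = b)
    (hmax2 : ∀ c' d', c' ≤ c → d ≤ d' → d' < n →
      Funnel B (SubPath g c') (d' - c' + 1) → c' = c ∧ d' = d)
    (hne : ¬(a = c ∧ b = d)) (hac : a < c) :
    b ≤ c + 1 ∧ (c + 1 = b → g c = -g b) :=
  maximal_funnel_intersection_general B g n hrange a b c d hbn hcd hdn hF1 hF2 hmax1 hmax2 hac

end

end EV
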